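/- arXiv:0901.0377 — 3 statements merged into one kernel-verified Lean document; each statement's English description precedes it below -/
import Mathlib

section
/- For any complex vector space W and any positive integer N, one has the direct sum decomposition of subspaces Ē(W) = E(W) ⊕ Ē₀(W) inside F(W); that is, E(W) ∩ Ē₀(W) = 0 and every element of Ē(W) is the sum of an element of E(W) and an element of Ē₀(W). -/
/-!
Write a nonzero `p` as `Xᵐ q` with `q = c + X g`, `c ≠ 0`. The shift `x` is invertible on
`E(W)`, and `q(x) = c (1 - T)` with `T = -c⁻¹ x g(x)`. Since `T` lowers by `N > 0` the index from
which each `a_k w` vanishes, `1 - T` is injective on `E(W)` and the geometric series `∑ Tʲ`,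
finite at each `(k, w)`, inverts it there. So `p(x)` is a bijection of `E(W)`: injectivity gives
`E ∩ Ē₀ = 0`, and if `p(x) a ∈ E(W)`, the `b ∈ E(W)` with `p(x) b = p(x) a` gives
`a = b + (a - b)` with `a - b ∈ Ē₀`.
-/
open scoped TensorProduct

noncomputable section
namespace Twisted

variable (N : ℕ) (W : Type) [AddCommGroup W] [Module ℂ W]

/-- The shift operator on `F(W) = (ℤ → End W)`, encoding multiplication by `x`:
`(x·a)_k = a_{k+N}`. -/
def shiftE : Module.End ℂ (ℤ → Module.End ℂ W) where
  toFun a := fun k => a (k + N)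
  map_add' _ _ := rfl
  map_smul' _ _ := rfl

/-- The action of `ℂ[x]` on `F(W)`. -/
def polyAct (p : Polynomial ℂ) (a : ℤ → Module.End ℂ W) : ℤ → Module.End ℂ W :=
  Polynomial.aeval (shiftE N W) p a

/-- Membership in `E(W)`. -/
def memE (a : ℤ → Module.End ℂ W) : Prop :=
  ∀ w : W, ∃ M : ℤ, ∀ k ≥ M, a k w = 0

/-- Membership in `Ē(W)`. -/
def memEbar (a : ℤ → Module.End ℂ W) : Prop :=
  ∃ p : Polynomial ℂ, p ≠ 0 ∧ memE W (polyAct N W p a)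

/-- Membership in `Ē₀(W)`. -/
def memE0 (a : ℤ → Module.End ℂ W) : Prop :=
  ∃ p : Polynomial ℂ, p ≠ 0 ∧ polyAct N W p a = 0


open Polynomial Filter

theorem _root_.LinearMap.exists_eventually_eq {ι R V V' : Type*} [Semiring R] [AddCommMonoid V]
    [AddCommMonoid V'] [Module R V] [Module R V'] {l : Filter ι} [l.NeBot]
    (f : ι → V →ₗ[R] V') (hf : ∀ v, ∃ x, ∀ᶠ i in l, f i v = x) :
    ∃ g : V →ₗ[R] V', ∀ v, ∀ᶠ i in l, f i v = g v := by
  choose g hg using hf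
  refine ⟨{ toFun := g, map_add' := fun v v' => ?_, map_smul' := fun c v => ?_ }, hg⟩
  · obtain ⟨i, h, h₁, h₂⟩ := ((hg (v + v')).and ((hg v).and (hg v'))).exists
    rw [← h, ← h₁, ← h₂, map_add]
  · obtain ⟨i, h, h₁⟩ := ((hg (c • v)).and (hg v)).exists
    rw [← h, ← h₁, map_smul, RingHom.id_apply]

theorem _root_.Submodule.bijOn_smul {K V : Type*} [Field K] [AddCommGroup V] [Module K V]
    (p : Submodule K V) {c : K} (hc : c ≠ 0) : Set.BijOn (c • ·) (p : Set V) p :=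
  ⟨fun _ ha => p.smul_mem c ha, fun _ _ _ _ h => smul_right_injective V hc h,
    fun a ha => ⟨c⁻¹ • a, p.smul_mem _ ha, smul_inv_smul₀ hc a⟩⟩

variable {N W}

variable (W) in
def vanishingFrom (w : W) (M : ℤ) : Submodule ℂ (ℤ → Module.End ℂ W) where
  carrier := {a | ∀ k ≥ M, a k w = 0}
  add_mem' ha hb k hk := by simp [ha k hk, hb k hk]
  zero_mem' _ _ := rfl
  smul_mem' c _ ha k hk := by simp [ha k hk]

variable (W) in
def submoduleE : Submodule ℂ (ℤ → Module.End ℂ W) where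
  carrier := {a | memE W a}
  add_mem' {a b} ha hb w := by
    obtain ⟨M, hM⟩ := ha w
    obtain ⟨M', hM'⟩ := hb w
    exact ⟨max M M', fun k hk => by
      simp [hM k (le_of_max_le_left hk), hM' k (le_of_max_le_right hk)]⟩
  zero_mem' _ := ⟨0, fun _ _ => rfl⟩
  smul_mem' c _ ha w := (ha w).imp fun _ hM k hk => by simp [hM k hk]

theorem vanishingFrom_mono {w : W} {M M' : ℤ} (h : M ≤ M') :
    vanishingFrom W w M ≤ vanishingFrom W w M' :=
  fun _ ha k hk => ha k (h.trans hk)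

theorem exists_sub_mul_le (hN : 0 < N) (M k : ℤ) : ∃ n : ℕ, M - n * N ≤ k :=
  ⟨(M - k).toNat, by nlinarith [Int.self_le_toNat (M - k), Int.natCast_nonneg (M - k).toNat]⟩

theorem apply_eq_zero_of_forall_mem_vanishingFrom (hN : 0 < N) {w : W} {M : ℤ}
    {a : ℤ → Module.End ℂ W} (ha : ∀ n : ℕ, a ∈ vanishingFrom W w (M - n * N)) (k : ℤ) :
    a k w = 0 := by
  obtain ⟨n, hn⟩ := exists_sub_mul_le hN M k
  exact ha n k hn

section GeometricSeries

variable (N) in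
def LowersVanishingThreshold (T : Module.End ℂ (ℤ → Module.End ℂ W)) : Prop :=
  ∀ w M, ∀ a ∈ vanishingFrom W w M, T a ∈ vanishingFrom W w (M - N)

variable {T : Module.End ℂ (ℤ → Module.End ℂ W)}

theorem pow_apply_mem_vanishingFrom (hT : LowersVanishingThreshold N T) {w : W} {M : ℤ}
    {a : ℤ → Module.End ℂ W} (ha : a ∈ vanishingFrom W w M) (n : ℕ) :
    (T ^ n) a ∈ vanishingFrom W w (M - n * N) := by
  induction n with
  | zero => simpa using ha
  | succ n ih =>
    rw [pow_succ', Module.End.mul_apply, Nat.cast_succ, add_mul, one_mul, ← sub_sub]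
    exact hT w _ _ ih

theorem eq_zero_of_one_sub_apply_eq_zero (hN : 0 < N) (hT : LowersVanishingThreshold N T)
    {a : ℤ → Module.End ℂ W} (ha : a ∈ submoduleE W) (h : (1 - T) a = 0) : a = 0 := by
  have hfix (n : ℕ) : (T ^ n) a = a :=
    (Module.End.pow_apply T n a).trans (Function.iterate_fixed (sub_eq_zero.mp h).symm n)
  funext k
  ext w
  obtain ⟨M, hM⟩ := ha w
  exact apply_eq_zero_of_forall_mem_vanishingFrom hN
    (fun n => hfix n ▸ pow_apply_mem_vanishingFrom hT hM n) k

theorem exists_one_sub_apply_eq (hN : 0 < N) (hT : LowersVanishingThreshold N T)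
    {e : ℤ → Module.End ℂ W} (he : e ∈ submoduleE W) :
    ∃ b ∈ submoduleE W, (1 - T) b = e := by
  set P : ℕ → ℤ → Module.End ℂ W := fun n => ∑ j ∈ Finset.range n, (T ^ j) e
  have hP_tail {w : W} {M : ℤ} (hM : e ∈ vanishingFrom W w M) {n m : ℕ} (hnm : n ≤ m) :
      P m - P n ∈ vanishingFrom W w (M - n * N) := by
    rw [Finset.sum_range_sub_sum_range hnm]
    refine Submodule.sum_mem _ fun j hj => ?_
    refine vanishingFrom_mono ?_ (pow_apply_mem_vanishingFrom hT hM j)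
    have : (n : ℤ) ≤ j := by exact_mod_cast (Finset.mem_filter.mp hj).2
    nlinarith
  have hP_stable (k : ℤ) (w : W) : ∃ x, ∀ᶠ n in atTop, P n k w = x := by
    obtain ⟨M, hM⟩ := he w
    obtain ⟨n₀, hn₀⟩ := exists_sub_mul_le hN M k
    refine ⟨P n₀ k w, eventually_atTop.mpr ⟨n₀, fun m hm => ?_⟩⟩
    exact sub_eq_zero.mp (hP_tail hM hm k hn₀)
  choose b hb using fun k => LinearMap.exists_eventually_eq (fun n => P n k) (hP_stable k)
  have hb_tail {w : W} {M : ℤ} (hM : e ∈ vanishingFrom W w M) (n : ℕ) :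
      b - P n ∈ vanishingFrom W w (M - n * N) := by
    intro k hk
    obtain ⟨m, hPm, hm⟩ := ((hb k w).and (eventually_ge_atTop n)).exists
    rw [Pi.sub_apply, LinearMap.sub_apply, ← hPm]
    exact hP_tail hM hm k hk
  have hP_geom (n : ℕ) : (1 - T) (P n) = e - (T ^ n) e := by
    have h := LinearMap.congr_fun (mul_neg_geom_sum T n) e
    rwa [Module.End.mul_apply, LinearMap.sum_apply, LinearMap.sub_apply, Module.End.one_apply] at h
  refine ⟨b, fun w => (he w).imp fun M hM => ?_, sub_eq_zero.mp ?_⟩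
  · have h := hb_tail hM 0
    simp only [P, Finset.range_zero, Finset.sum_empty, sub_zero, Nat.cast_zero, zero_mul] at h
    exact h
  funext k
  ext w
  obtain ⟨M, hM⟩ := he w
  refine apply_eq_zero_of_forall_mem_vanishingFrom hN (M := M) (fun n => ?_) k
  have hsplit : (1 - T) b - e = (1 - T) (b - P n) - (T ^ n) e := by
    rw [map_sub, hP_geom]
    abel
  rw [hsplit, LinearMap.sub_apply, Module.End.one_apply]
  refine sub_mem (sub_mem (hb_tail hM n) ?_) (pow_apply_mem_vanishingFrom hT hM n)
  exact vanishingFrom_mono (by omega) (hT w _ _ (hb_tail hM n))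

theorem bijOn_one_sub (hN : 0 < N) (hT : LowersVanishingThreshold N T) :
    Set.BijOn ⇑(1 - T) (submoduleE W) (submoduleE W) := by
  have hTE (a) (ha : a ∈ submoduleE W) : T a ∈ submoduleE W :=
    fun w => (ha w).imp fun M hM => vanishingFrom_mono (by omega) (hT w M a hM)
  refine ⟨fun a ha => ?_, fun a ha a' ha' h => ?_, fun e he => exists_one_sub_apply_eq hN hT he⟩
  · rw [SetLike.mem_coe, LinearMap.sub_apply, Module.End.one_apply]
    exact sub_mem ha (hTE a ha)
  · refine sub_eq_zero.mp (eq_zero_of_one_sub_apply_eq_zero hN hT (sub_mem ha ha') ?_)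
    rw [map_sub, h, sub_self]

end GeometricSeries

theorem polyAct_zero (p : ℂ[X]) : polyAct N W p 0 = 0 :=
  map_zero _

theorem polyAct_add (p : ℂ[X]) (a b : ℤ → Module.End ℂ W) :
    polyAct N W p (a + b) = polyAct N W p a + polyAct N W p b :=
  map_add _ a b

theorem polyAct_sub (p : ℂ[X]) (a b : ℤ → Module.End ℂ W) :
    polyAct N W p (a - b) = polyAct N W p a - polyAct N W p b :=
  map_sub _ a b

theorem shiftE_mem_vanishingFrom {w : W} {M : ℤ} {a : ℤ → Module.End ℂ W}
    (ha : a ∈ vanishingFrom W w M) : shiftE N W a ∈ vanishingFrom W w (M - N) :=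
  fun k hk => ha (k + N) (by omega)

theorem polyAct_mem_vanishingFrom (p : ℂ[X]) {w : W} {M : ℤ} {a : ℤ → Module.End ℂ W}
    (ha : a ∈ vanishingFrom W w M) : polyAct N W p a ∈ vanishingFrom W w M :=
  aeval_apply_smul_mem_of_le_comap ha p _
    fun _ hb => vanishingFrom_mono (by omega) (shiftE_mem_vanishingFrom hb)

theorem mapsTo_polyAct (p : ℂ[X]) :
    Set.MapsTo (polyAct N W p) (submoduleE W) (submoduleE W) :=
  fun _ ha w => (ha w).imp fun _ => polyAct_mem_vanishingFrom p

theorem bijOn_shiftE : Set.BijOn (shiftE N W) (submoduleE W) (submoduleE W) := by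
  refine ⟨fun a ha w => (ha w).imp fun M hM => ?_, fun a _ a' _ h => ?_, fun e he => ?_⟩
  · exact vanishingFrom_mono (by omega) (shiftE_mem_vanishingFrom hM)
  · funext k
    simpa [shiftE] using congrFun h (k - N)
  · refine ⟨fun k => e (k - N), fun w => ?_, funext fun k => by simp [shiftE]⟩
    obtain ⟨M, hM⟩ := he w
    exact ⟨M + N, fun k hk => hM (k - N) (by omega)⟩

theorem bijOn_polyAct_of_coeff_zero_ne_zero (hN : 0 < N) {q : ℂ[X]} (hq : q.coeff 0 ≠ 0) :
    Set.BijOn (polyAct N W q) (submoduleE W) (submoduleE W) := by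
  obtain ⟨g, hg⟩ := X_dvd_sub_C (p := q)
  set c := q.coeff 0
  set T := -c⁻¹ • (shiftE N W * aeval (shiftE N W) g)
  have hT : LowersVanishingThreshold N T := fun w M a ha =>
    Submodule.smul_mem _ _ (shiftE_mem_vanishingFrom (polyAct_mem_vanishingFrom g ha))
  have hqT : polyAct N W q = (c • ·) ∘ ⇑(1 - T) := by
    funext a
    rw [eq_add_of_sub_eq' hg]
    simp [polyAct, T, smul_smul, hq]
  rw [hqT]
  exact (Submodule.bijOn_smul _ hq).comp (bijOn_one_sub hN hT)

theorem bijOn_polyAct (hN : 0 < N) {p : ℂ[X]} (hp : p ≠ 0) :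
    Set.BijOn (polyAct N W p) (submoduleE W) (submoduleE W) := by
  obtain ⟨q, hpq, hq⟩ := exists_eq_pow_rootMultiplicity_mul_and_not_dvd p hp 0
  rw [C_0, sub_zero] at hpq hq
  generalize p.rootMultiplicity 0 = m at hpq
  have hpq' : polyAct N W p = (shiftE N W)^[m] ∘ polyAct N W q := by
    funext a
    rw [polyAct, hpq, map_mul, map_pow, aeval_X, Module.End.mul_apply, Module.End.pow_apply]
    rfl
  rw [hpq']
  exact (bijOn_shiftE.iterate _).comp (bijOn_polyAct_of_coeff_zero_ne_zero hN (mt X_dvd_iff.mpr hq))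

/-- `Ē(W) = E(W) ⊕ Ē₀(W)`:  the subspaces `E(W)` and `Ē₀(W)` intersect
trivially, every element of `Ē(W)` is a sum of an element of `E(W)` and an element of
`Ē₀(W)`, and conversely any such sum lies in `Ē(W)`. -/
theorem statement7 (N : ℕ) (hN : 0 < N) (W : Type) [AddCommGroup W] [Module ℂ W] :
    (∀ a : ℤ → Module.End ℂ W, memE W a → memE0 N W a → a = 0) ∧
    (∀ a : ℤ → Module.End ℂ W, memEbar N W a →
      ∃ b c : ℤ → Module.End ℂ W, memE W b ∧ memE0 N W c ∧ a = b + c) ∧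
    (∀ b c : ℤ → Module.End ℂ W, memE W b → memE0 N W c → memEbar N W (b + c)) := by
  refine ⟨?_, ?_, ?_⟩
  · rintro a ha ⟨p, hp, hpa⟩
    exact (bijOn_polyAct hN hp).injOn ha (zero_mem _) (by rw [hpa, polyAct_zero])
  · rintro a ⟨p, hp, he⟩
    obtain ⟨b, hb, hpb⟩ := (bijOn_polyAct hN hp).surjOn he
    refine ⟨b, a - b, hb, ⟨p, hp, ?_⟩, (add_sub_cancel b a).symm⟩
    rw [polyAct_sub, hpb, sub_self]
  · rintro b c hb ⟨q, hq, hqc⟩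
    refine ⟨q, hq, ?_⟩
    rw [polyAct_add, hqc, add_zero]
    exact mapsTo_polyAct q hb

end Twisted
end
end

section
/- Let W be a complex vector space, N a positive integer, a ∈ Ē(W), n ∈ ℤ, and w ∈ W. Then there exist r ∈ ℕ and complex numbers β₀, β₁, …, β_r (depending on a, n and w) such that (ψ_R(a))_n w = Σ_{i=0}^{r} β_i a_{n+Ni} w. -/
/-! Since `x` acts invertibly on `F(W)`, `a − e` has an annihilating polynomial `q` with
`q(0) ≠ 0`. Read along the progression `n + Nℕ`, the relation `q·e = q·a` expresses `e_k w`
through the `a_{k+Nj} w` and the `e_{k+Nj} w` with `j ≥ 1`. As `e_k w = 0` for large `k`,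
downward induction puts `e_n w` in the span of the `a_{n+Ni} w`. -/

open scoped TensorProduct

noncomputable section
namespace Twisted

variable (N : ℕ) (W : Type) [AddCommGroup W] [Module ℂ W]

open Polynomial

theorem forall_of_forall_ge_of_step {P : ℕ → Prop} (M : ℕ) (hM : ∀ t ≥ M, P t)
    (hstep : ∀ t, (∀ j, P (t + j + 1)) → P t) (t : ℕ) : P t := by
  suffices h : ∀ d t, M ≤ t + d → P t from h M t (by omega)
  intro d
  induction d with
  | zero => exact hM
  | succ d ih => exact fun t ht => hstep t fun j => ih _ (by omega)

section Recurrence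

variable {K V : Type*} [Field K] [AddCommGroup V] [Module K V]

theorem mem_span_range_of_recurrence (q : K[X]) (hq : q.coeff 0 ≠ 0) {f g : ℕ → V}
    (hrec : ∀ t, ∑ j ∈ Finset.range (q.natDegree + 1), q.coeff j • f (t + j) =
      ∑ j ∈ Finset.range (q.natDegree + 1), q.coeff j • g (t + j))
    (M : ℕ) (hM : ∀ t ≥ M, f t = 0) (t : ℕ) : f t ∈ Submodule.span K (Set.range g) := by
  set S := Submodule.span K (Set.range g)
  refine forall_of_forall_ge_of_step M (fun t ht => hM t ht ▸ S.zero_mem) (fun t hlater => ?_) t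
  have hg : ∑ j ∈ Finset.range (q.natDegree + 1), q.coeff j • g (t + j) ∈ S :=
    S.sum_mem fun j _ => S.smul_mem _ (Submodule.subset_span ⟨_, rfl⟩)
  have hf : ∑ j ∈ Finset.range q.natDegree, q.coeff (j + 1) • f (t + (j + 1)) ∈ S :=
    S.sum_mem fun j _ => S.smul_mem _ (by rw [← add_assoc]; exact hlater j)
  have hsplit := hrec t
  rw [Finset.sum_range_succ', add_zero] at hsplit
  rw [← S.smul_mem_iff hq, eq_sub_of_add_eq' hsplit]
  exact S.sub_mem hg hf

theorem exists_sum_range_eq_of_mem_span_range {g : ℕ → V} {v : V}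
    (hv : v ∈ Submodule.span K (Set.range g)) :
    ∃ (r : ℕ) (β : ℕ → K), v = ∑ i ∈ Finset.range (r + 1), β i • g i := by
  obtain ⟨c, rfl⟩ := Finsupp.mem_span_range_iff_exists_finsupp.mp hv
  refine ⟨c.support.sup id, c, Finsupp.sum_of_support_subset c (fun i hi => ?_) _
    fun i _ => zero_smul K _⟩
  exact Finset.mem_range.mpr (Nat.lt_succ_of_le (Finset.le_sup (f := id) hi))

end Recurrence

theorem shiftE_pow_apply (j : ℕ) (a : ℤ → Module.End ℂ W) (k : ℤ) :
    (shiftE N W ^ j) a k = a (k + N * j) := by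
  induction j generalizing a with
  | zero => simp
  | succ j ih =>
    rw [pow_succ, Module.End.mul_apply, ih]
    change a (k + N * j + N) = _
    congr 1
    push_cast
    ring

theorem polyAct_apply (p : ℂ[X]) (a : ℤ → Module.End ℂ W) (k : ℤ) :
    polyAct N W p a k = ∑ j ∈ Finset.range (p.natDegree + 1), p.coeff j • a (k + N * j) := by
  simp only [polyAct, aeval_eq_sum_range, LinearMap.sum_apply, Finset.sum_apply,
    LinearMap.smul_apply, Pi.smul_apply, shiftE_pow_apply]

theorem exists_coeff_zero_ne_zero_polyAct_eq_zero {p : ℂ[X]} (hp : p ≠ 0)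
    {a : ℤ → Module.End ℂ W} (hpa : polyAct N W p a = 0) :
    ∃ q : ℂ[X], q.coeff 0 ≠ 0 ∧ polyAct N W q a = 0 := by
  obtain ⟨q, hpq, hXq⟩ := p.exists_eq_pow_rootMultiplicity_mul_and_not_dvd hp 0
  generalize p.rootMultiplicity 0 = m at hpq
  rw [map_zero, sub_zero] at hpq hXq
  refine ⟨q, fun h => hXq (X_dvd_iff.mpr h), funext fun k => ?_⟩
  have hk := congr_fun hpa (k - N * m)
  rw [hpq, polyAct, map_mul, map_pow, aeval_X, Module.End.mul_apply, shiftE_pow_apply,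
    sub_add_cancel] at hk
  exact hk

theorem sum_coeff_smul_apply_eq_of_polyAct_sub_eq_zero (q : ℂ[X])
    {a e : ℤ → Module.End ℂ W} (h : polyAct N W q (a - e) = 0) (n : ℤ) (w : W) (t : ℕ) :
    ∑ j ∈ Finset.range (q.natDegree + 1), q.coeff j • e (n + N * ↑(t + j)) w =
      ∑ j ∈ Finset.range (q.natDegree + 1), q.coeff j • a (n + N * ↑(t + j)) w := by
  have ht := LinearMap.congr_fun (congr_fun h (n + N * t)) w
  simp only [polyAct_apply, LinearMap.sum_apply, LinearMap.smul_apply, Pi.sub_apply,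
    LinearMap.sub_apply, smul_sub, Finset.sum_sub_distrib, Pi.zero_apply, LinearMap.zero_apply,
    sub_eq_zero] at ht
  simpa only [Nat.cast_add, mul_add, add_assoc] using ht.symm


/-- Here `ψ_R(a)` is encoded as any `e ∈ E(W)` with `a − e ∈ Ē₀(W)`, which determines it. -/
theorem statement14_general (N : ℕ) (hN : 0 < N) (W : Type) [AddCommGroup W] [Module ℂ W]
    (a : ℤ → Module.End ℂ W) (n : ℤ) (w : W) :
    ∀ e : ℤ → Module.End ℂ W, memE W e → memE0 N W (a - e) →
      ∃ (r : ℕ) (β : ℕ → ℂ),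
        e n w = ∑ i ∈ Finset.range (r + 1), β i • a (n + N * i) w := by
  rintro e he ⟨p, hp, hpe⟩
  obtain ⟨q, hq0, hq⟩ := exists_coeff_zero_ne_zero_polyAct_eq_zero N W hp hpe
  obtain ⟨M, hM⟩ := he w
  have hvanish : ∀ t ≥ (M - n).toNat, e (n + N * t) w = 0 := fun t ht => hM _ <| by
    have : (t : ℤ) ≤ N * t := le_mul_of_one_le_left (by positivity) (by exact_mod_cast hN)
    omega
  have hspan := mem_span_range_of_recurrence q hq0 (g := fun t : ℕ => a (n + N * t) w)
    (sum_coeff_smul_apply_eq_of_polyAct_sub_eq_zero N W q hq n w) _ hvanish 0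
  rw [Nat.cast_zero, mul_zero, add_zero] at hspan
  exact exists_sum_range_eq_of_mem_span_range hspan

/-- For `a ∈ Ē(W)`, `n ∈ ℤ` and `w ∈ W` there are `r ∈ ℕ` and complex
numbers `β₀, …, β_r` with `(ψ_R(a))_n w = Σ_{i=0}^{r} β_i a_{n+Ni} w`; here `ψ_R(a)` is
characterized as the unique `e ∈ E(W)` with `a − e ∈ Ē₀(W)`. -/
theorem statement14 (N : ℕ) (hN : 0 < N) (W : Type) [AddCommGroup W] [Module ℂ W]
    (a : ℤ → Module.End ℂ W) (ha : memEbar N W a) (n : ℤ) (w : W) :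
    ∀ e : ℤ → Module.End ℂ W, memE W e → memE0 N W (a - e) →
      ∃ (r : ℕ) (β : ℕ → ℂ),
        e n w = ∑ i ∈ Finset.range (r + 1), β i • a (n + N * i) w :=
  statement14_general N hN W a n w

end Twisted
end
end

section
/- Let s₀ be a nonzero complex number. The linear map ev : L(g,σ) → g determined by ev(s^k ⊗ a) = s₀^k a for k ∈ ℤ and a ∈ g_k is a surjective Lie algebra homomorphism, and its kernel equals (s^N − s₀^N)·L(g,σ) = {(s^N − s₀^N)·u : u ∈ L(g,σ)}, where (s^N − s₀^N)·(f ⊗ a) = ((s^N − s₀^N)f) ⊗ a (note that multiplication by s^N − s₀^N maps L(g,σ) into itself). -/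
open scoped TensorProduct

noncomputable section
namespace Twisted

variable (g : Type) [LieRing g] [LieAlgebra ℂ g]

abbrev Amb : Type := LaurentPolynomial ℂ ⊗[ℂ] g

instance : LieAlgebra ℂ (Amb g) :=
  { (inferInstance : Module ℂ (Amb g)) with
    lie_smul := fun c x y => by
      rw [← algebraMap_smul (LaurentPolynomial ℂ) c y,
        lie_smul (R := LaurentPolynomial ℂ) (algebraMap ℂ (LaurentPolynomial ℂ) c) x y,
        algebraMap_smul] }

/-- `ε = exp(2πi/N)`. -/
def eps (N : ℕ) : ℂ := Complex.exp (2 * (Real.pi : ℂ) * Complex.I / (N : ℂ))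

variable (σ : g ≃ₗ⁅ℂ⁆ g) (N : ℕ)

/-- `a ∈ g_k`, i.e. `σ a = ε^k • a`. -/
def homog (k : ℤ) (a : g) : Prop := σ a = eps N ^ k • a

/-- The generators `s^k ⊗ a`, for `a ∈ g_k`. -/
def genSet : Set (Amb g) :=
  {x | ∃ (k : ℤ) (a : g), homog g σ N k a ∧ x = LaurentPolynomial.T k ⊗ₜ[ℂ] a}

/-- The twisted loop algebra `L(g,σ)`, the Lie subalgebra of `ℂ[s,s⁻¹] ⊗ g`
spanned by the elements `s^k ⊗ a` with `a ∈ g_k`. -/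
def Loop : LieSubalgebra ℂ (Amb g) := LieSubalgebra.lieSpan ℂ (Amb g) (genSet g σ N)

/-- The element `s^k ⊗ a` of `L(g,σ)`, for `a ∈ g_k`. -/
def sGen (k : ℤ) (a : g) (h : homog g σ N k a) : Loop g σ N :=
  ⟨LaurentPolynomial.T k ⊗ₜ[ℂ] a, LieSubalgebra.subset_lieSpan ⟨k, a, h, rfl⟩⟩

/-- The element `(s^k p(s^N)) ⊗ a` of `L(g,σ)`, for `a ∈ g_k`. -/
def sPolyGen (p : Polynomial ℂ) (k : ℤ) (a : g)
    (h : ∀ i : ℕ, homog g σ N (k + N * i) a) : Loop g σ N :=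
  ∑ i ∈ Finset.range (p.natDegree + 1), p.coeff i • sGen g σ N (k + N * i) a (h i)

/-
Evaluation at `s₀` is the restriction to `L(g,σ)` of the Lie algebra homomorphism
`f ⊗ a ↦ f(s₀) a` on `ℂ[s,s⁻¹] ⊗ g`. Since `σ^N = 1`, the averaging operators
`π_r = N⁻¹ ∑_j ε^(-rj) σ^j` project `g` onto the eigenspaces `g_r` and sum to the identity, so
`a ↦ ∑_{r<N} s₀^(-r) s^r ⊗ π_r a` is a linear section of `ev` with values in `L(g,σ)`; hence `ev`
is onto. For the kernel, every `u ∈ L(g,σ)` is congruent to this section applied to `ev u` modulo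
`(s^N − s₀^N)·L(g,σ)`: on a generator `s^(r+Nm) ⊗ a` this says `s^(r+Nm) ⊗ a ≡ s₀^(Nm) s^r ⊗ a`,
which follows by induction on `m` from `s^N ≡ s₀^N`. So `ev u = 0` puts `u` in that submodule.
-/

lemma sum_range_shift_eq_of_eq {M : Type*} [AddCommMonoid M] [IsCancelAdd M] {t : ℕ → M} {n : ℕ}
    (h : t n = t 0) :
    ∑ j ∈ Finset.range n, t (j + 1) = ∑ j ∈ Finset.range n, t j := by
  have h1 := Finset.sum_range_succ t n
  rw [Finset.sum_range_succ', h] at h1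
  exact add_right_cancel h1

section EigenProj

variable {K V : Type*} [Field K] [AddCommGroup V] [Module K V]

def eigenProj (f : V →ₗ[K] V) (ζ : K) (n : ℕ) (r : ℤ) : V →ₗ[K] V :=
  (n : K)⁻¹ • ∑ j ∈ Finset.range n, (ζ ^ r)⁻¹ ^ j • f ^ j

variable {f : V →ₗ[K] V} {ζ : K} {n : ℕ}

lemma geom_sum_eq_zero_of_pow_eq_one {z : K} (hz : z ^ n = 1) (hz1 : z ≠ 1) :
    ∑ j ∈ Finset.range n, z ^ j = 0 := by
  rw [geom_sum_eq hz1, hz, sub_self, zero_div]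

lemma pow_apply_of_apply_eq_smul {μ : K} {v : V} (hv : f v = μ • v) (j : ℕ) :
    (f ^ j) v = μ ^ j • v := by
  induction j with
  | zero => simp
  | succ j ih => rw [pow_succ', Module.End.mul_apply, ih, map_smul, hv, smul_smul, pow_succ]

lemma eigenProj_apply_of_apply_eq_zpow_smul (hζ : IsPrimitiveRoot ζ n) (hn : 0 < n)
    {k : ℤ} {v : V} (hv : f v = ζ ^ k • v) (r : ℤ) :
    eigenProj f ζ n r v = if (n : ℤ) ∣ k - r then v else 0 := by
  have hζ0 : ζ ≠ 0 := hζ.ne_zero hn.ne'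
  have hterm : ∀ j : ℕ, ((ζ ^ r)⁻¹ ^ j • f ^ j) v = (ζ ^ (k - r)) ^ j • v := fun j => by
    rw [LinearMap.smul_apply, pow_apply_of_apply_eq_smul hv, smul_smul, ← mul_pow,
      zpow_sub₀ hζ0, div_eq_inv_mul]
  simp only [eigenProj, LinearMap.smul_apply, LinearMap.sum_apply, hterm, ← Finset.sum_smul]
  split_ifs with hdvd
  · have : NeZero n := NeZero.of_pos hn
    rw [(hζ.zpow_eq_one_iff_dvd _).2 hdvd]
    simp [smul_smul, hζ.neZero'.out]
  · have hpow : (ζ ^ (k - r)) ^ n = 1 := by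
      rw [← zpow_natCast, ← zpow_mul, mul_comm, zpow_mul, zpow_natCast, hζ.pow_eq_one, one_zpow]
    rw [geom_sum_eq_zero_of_pow_eq_one hpow (mt (hζ.zpow_eq_one_iff_dvd _).1 hdvd), zero_smul,
      smul_zero]

lemma apply_eigenProj (hζ : ζ ^ n = 1) (hf : ∀ v, (f ^ n) v = v) (r : ℤ) (v : V) :
    f (eigenProj f ζ n r v) = ζ ^ r • eigenProj f ζ n r v := by
  rcases n.eq_zero_or_pos with rfl | hn
  · simp [eigenProj]
  have hζ0 : ζ ≠ 0 := by rintro rfl; simp [hn.ne'] at hζ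
  set x := (ζ ^ r)⁻¹
  set t : ℕ → V := fun j => x ^ j • (f ^ j) v
  have hxn : x ^ n = 1 := by
    rw [inv_pow, ← zpow_natCast, ← zpow_mul, mul_comm, zpow_mul, zpow_natCast, hζ, one_zpow,
      inv_one]
  have hstep : ∀ j, f (t j) = ζ ^ r • t (j + 1) := fun j => by
    simp only [t, map_smul, smul_smul, pow_succ', Module.End.mul_apply]
    rw [← mul_assoc, mul_inv_cancel₀ (zpow_ne_zero r hζ0), one_mul]
  have hshift : ∑ j ∈ Finset.range n, t (j + 1) = ∑ j ∈ Finset.range n, t j :=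
    sum_range_shift_eq_of_eq (by simp [t, hxn, hf])
  have hproj : eigenProj f ζ n r v = (n : K)⁻¹ • ∑ j ∈ Finset.range n, t j := by
    simp only [eigenProj, LinearMap.smul_apply, LinearMap.sum_apply]
    rfl
  rw [hproj, map_smul, map_sum, Finset.sum_congr rfl fun j _ => hstep j, ← Finset.smul_sum,
    hshift, smul_comm]

lemma sum_eigenProj (hζ : IsPrimitiveRoot ζ n) (hn : 0 < n) (v : V) :
    ∑ r ∈ Finset.range n, eigenProj f ζ n r v = v := by
  have hcoeff : ∀ j ∈ Finset.range n, ∑ r ∈ Finset.range n, (ζ ^ (r : ℤ))⁻¹ ^ j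
      = if j = 0 then (n : K) else 0 := by
    intro j hj
    have hswap : ∀ r : ℕ, (ζ ^ (r : ℤ))⁻¹ ^ j = (ζ ^ j)⁻¹ ^ r := fun r => by
      rw [zpow_natCast, ← inv_pow, ← inv_pow, ← pow_mul, ← pow_mul, mul_comm]
    simp only [hswap]
    split_ifs with hj0
    · simp [hj0]
    · refine geom_sum_eq_zero_of_pow_eq_one ?_ ?_
      · rw [inv_pow, ← pow_mul, mul_comm, pow_mul, hζ.pow_eq_one, one_pow, inv_one]
      · rw [Ne, inv_eq_one]
        exact hζ.pow_ne_one_of_pos_of_lt hj0 (Finset.mem_range.1 hj)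
  have : NeZero n := NeZero.of_pos hn
  simp only [eigenProj, LinearMap.smul_apply, LinearMap.sum_apply, ← Finset.smul_sum]
  rw [Finset.sum_comm]
  simp only [← Finset.sum_smul]
  rw [Finset.sum_congr rfl fun j hj => by rw [hcoeff j hj],
    Finset.sum_eq_single_of_mem 0 (Finset.mem_range.2 hn)]
  · simp [smul_smul, hζ.neZero'.out]
  · intro j _ hj; simp [hj]

end EigenProj

open LaurentPolynomial

section LoopAlgebra

variable {g σ N}

lemma isPrimitiveRoot_eps (hN : 0 < N) : IsPrimitiveRoot (eps N) N :=
  Complex.isPrimitiveRoot_exp N hN.ne'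

lemma eps_ne_zero : eps N ≠ 0 := Complex.exp_ne_zero _

lemma homog_lie {k l : ℤ} {a b : g} (ha : homog g σ N k a) (hb : homog g σ N l b) :
    homog g σ N (k + l) ⁅a, b⁆ := by
  rw [homog, LieEquiv.map_lie, ha, hb, smul_lie, lie_smul, smul_smul, zpow_add₀ eps_ne_zero]

lemma homog_add_mul (hN : 0 < N) {k : ℤ} {a : g} (ha : homog g σ N k a) (m : ℤ) :
    homog g σ N (k + N * m) a := by
  rw [homog, ha, zpow_add₀ eps_ne_zero, zpow_mul, zpow_natCast,
    (isPrimitiveRoot_eps hN).pow_eq_one, one_zpow, mul_one]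

lemma lie_mem_span_genSet {x y : Amb g} (hx : x ∈ Submodule.span ℂ (genSet g σ N))
    (hy : y ∈ Submodule.span ℂ (genSet g σ N)) : ⁅x, y⁆ ∈ Submodule.span ℂ (genSet g σ N) := by
  let bracket : Amb g →ₗ[ℂ] Amb g →ₗ[ℂ] Amb g :=
    LinearMap.mk₂ ℂ (fun x y => ⁅x, y⁆) (fun x y z => add_lie x y z) (fun c x y => smul_lie c x y)
      (fun x y z => lie_add x y z) (fun c x y => lie_smul c x y)
  have h := Submodule.apply_mem_map₂ bracket hx hy
  rw [Submodule.map₂_span_span] at h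
  refine Submodule.span_le.2 ?_ h
  rintro _ ⟨_, ⟨k, a, ha, rfl⟩, _, ⟨l, b, hb, rfl⟩, rfl⟩
  refine Submodule.subset_span ⟨k + l, ⁅a, b⁆, homog_lie ha hb, ?_⟩
  exact (LieAlgebra.ExtendScalars.bracket_tmul ..).trans (by rw [T_add])

lemma loop_toSubmodule : (Loop g σ N).toSubmodule = Submodule.span ℂ (genSet g σ N) := by
  let K : LieSubalgebra ℂ (Amb g) := { Submodule.span ℂ (genSet g σ N) with
    lie_mem' := lie_mem_span_genSet }
  refine le_antisymm (LieSubalgebra.lieSpan_le.2 Submodule.subset_span : Loop g σ N ≤ K) ?_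
  exact Submodule.span_le.2 LieSubalgebra.subset_lieSpan

end LoopAlgebra

section Evaluation

def evalAt (s : ℂˣ) : LaurentPolynomial ℂ →ₐ[ℂ] ℂ :=
  { eval₂ (RingHom.id ℂ) s with commutes' := eval₂_C (RingHom.id ℂ) s }

lemma evalAt_T (s : ℂˣ) (k : ℤ) : evalAt s (T k) = (s : ℂ) ^ k := by
  change eval₂ (RingHom.id ℂ) s (T k) = _
  rw [eval₂_T, Units.val_zpow_eq_zpow_val]

lemma evalAt_T_sub_C (s : ℂˣ) (n : ℕ) : evalAt s (T n - C ((s : ℂ) ^ n)) = 0 := by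
  rw [map_sub, evalAt_T, zpow_natCast, C_eq_algebraMap, AlgHom.commutes, Algebra.algebraMap_self,
    RingHom.id_apply, sub_self]

def evalAmb (s : ℂˣ) : Amb g →ₗ[ℂ] g :=
  TensorProduct.lid ℂ g ∘ₗ (evalAt s).toLinearMap.rTensor g

variable {g}

@[simp]
lemma evalAmb_tmul (s : ℂˣ) (f : LaurentPolynomial ℂ) (a : g) :
    evalAmb g s (f ⊗ₜ a) = evalAt s f • a := by
  simp [evalAmb]

lemma evalAmb_smul (s : ℂˣ) (p : LaurentPolynomial ℂ) (x : Amb g) :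
    evalAmb g s (p • x) = evalAt s p • evalAmb g s x := by
  induction x using TensorProduct.induction_on with
  | zero => simp
  | add x y hx hy => rw [smul_add, map_add, map_add, hx, hy, smul_add]
  | tmul f a =>
    rw [TensorProduct.smul_tmul', evalAmb_tmul, evalAmb_tmul, smul_eq_mul, map_mul, smul_smul]

lemma evalAmb_lie (s : ℂˣ) (x y : Amb g) :
    evalAmb g s ⁅x, y⁆ = ⁅evalAmb g s x, evalAmb g s y⁆ := by
  induction x using TensorProduct.induction_on with
  | zero => exact (congrArg _ (zero_lie (L := Amb g) y)).trans (by rw [map_zero, zero_lie])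
  | add x₁ x₂ h₁ h₂ =>
    exact (congrArg _ (add_lie (L := Amb g) x₁ x₂ y)).trans
      (by rw [map_add, h₁, h₂, map_add, add_lie])
  | tmul f a =>
    induction y using TensorProduct.induction_on with
    | zero => rw [lie_zero (L := Amb g), map_zero, lie_zero]
    | add y₁ y₂ h₁ h₂ => rw [lie_add (L := Amb g), map_add, h₁, h₂, map_add, lie_add]
    | tmul h b =>
      rw [LieAlgebra.ExtendScalars.bracket_tmul, evalAmb_tmul, evalAmb_tmul, evalAmb_tmul, map_mul,
        smul_lie, lie_smul, smul_smul]

end Evaluation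

section Kernel

def evalSection (s : ℂˣ) : g →ₗ[ℂ] Amb g :=
  ∑ r ∈ Finset.range N, ((s : ℂ) ^ (-(r : ℤ))) •
    TensorProduct.mk ℂ (LaurentPolynomial ℂ) g (T r) ∘ₗ eigenProj σ.toLinearMap (eps N) N r

def smulLoop (p : LaurentPolynomial ℂ) : Submodule ℂ (Amb g) :=
  (Loop g σ N).toSubmodule.map (DistribSMul.toLinearMap ℂ (Amb g) p)

variable {g σ N}

lemma mem_loop_iff {x : Amb g} : x ∈ Loop g σ N ↔ x ∈ Submodule.span ℂ (genSet g σ N) := by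
  rw [← LieSubalgebra.mem_toSubmodule, loop_toSubmodule]

lemma T_tmul_mem_loop {k : ℤ} {a : g} (ha : homog g σ N k a) : T k ⊗ₜ a ∈ Loop g σ N :=
  LieSubalgebra.subset_lieSpan ⟨k, a, ha, rfl⟩

lemma ev_eq_evalAmb (s : ℂˣ) (ev : Loop g σ N →ₗ[ℂ] g)
    (hev : ∀ k a (h : homog g σ N k a), ev (sGen g σ N k a h) = (s : ℂ) ^ k • a)
    (u : Loop g σ N) : ev u = evalAmb g s u := by
  suffices ∀ x (hx : x ∈ Submodule.span ℂ (genSet g σ N)),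
      ev ⟨x, mem_loop_iff.2 hx⟩ = evalAmb g s x from this u (mem_loop_iff.1 u.2)
  intro x hx
  induction hx using Submodule.span_induction with
  | mem x hx =>
    obtain ⟨k, a, ha, rfl⟩ := hx
    rw [evalAmb_tmul, evalAt_T]
    exact hev k a ha
  | zero => exact (map_zero ev).trans (map_zero _).symm
  | add x y _ _ hx hy => rw [map_add]; exact (map_add ev ⟨x, _⟩ ⟨y, _⟩).trans (by rw [hx, hy])
  | smul c x _ hx => rw [map_smul]; exact (map_smul ev c ⟨x, _⟩).trans (by rw [hx])

lemma evalSection_apply (s : ℂˣ) (a : g) :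
    evalSection g σ N s a =
      ∑ r ∈ Finset.range N,
        (s : ℂ) ^ (-(r : ℤ)) • (T r ⊗ₜ eigenProj σ.toLinearMap (eps N) N r a) := by
  simp [evalSection]

lemma evalSection_mem_loop (hN : 0 < N) (hσ : ∀ a : g, (⇑σ)^[N] a = a) (s : ℂˣ) (a : g) :
    evalSection g σ N s a ∈ Loop g σ N := by
  rw [evalSection_apply]
  refine sum_mem fun r _ => (Loop g σ N).smul_mem _ (T_tmul_mem_loop ?_)
  exact apply_eigenProj (isPrimitiveRoot_eps hN).pow_eq_one
    (fun v => (Module.End.pow_apply _ _ _).trans (hσ v)) r a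

lemma evalAmb_evalSection (hN : 0 < N) (s : ℂˣ) (a : g) :
    evalAmb g s (evalSection g σ N s a) = a := by
  simp only [evalSection_apply, map_sum, map_smul, evalAmb_tmul, evalAt_T, smul_smul,
    ← zpow_add₀ s.ne_zero, neg_add_cancel, zpow_zero, one_smul]
  exact sum_eigenProj (isPrimitiveRoot_eps hN) hN a

lemma T_tmul_sub_mem_smulLoop (hN : 0 < N) (s : ℂˣ) {r : ℤ} {a : g} (ha : homog g σ N r a)
    (m : ℤ) :
    T (r + N * m) ⊗ₜ a - ((s : ℂ) ^ N) ^ m • (T r ⊗ₜ a) ∈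
      smulLoop g σ N (T N - C ((s : ℂ) ^ N)) := by
  set c := (s : ℂ) ^ N
  set D : LaurentPolynomial ℂ := T N - C c
  have hc : c ≠ 0 := pow_ne_zero _ s.ne_zero
  let x : ℤ → Amb g := fun j => T (r + N * j) ⊗ₜ a
  have hD : ∀ j, D • x j ∈ smulLoop g σ N D := fun j =>
    Submodule.mem_map_of_mem (p := (Loop g σ N).toSubmodule)
      (T_tmul_mem_loop (homog_add_mul hN ha j))
  have hshift : ∀ j, D • x j = x (j + 1) - c • x j := fun j => by
    simp only [x, D]
    rw [TensorProduct.smul_tmul', smul_eq_mul, sub_mul, ← T_add, ← smul_eq_C_mul,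
      TensorProduct.sub_tmul, ← TensorProduct.smul_tmul',
      show (N : ℤ) + (r + N * j) = r + N * (j + 1) by ring]
  have key : ∀ j, x (j + 1) - c ^ (j + 1) • x 0 = D • x j + c • (x j - c ^ j • x 0) := fun j => by
    rw [hshift, zpow_add_one₀ hc]
    module
  suffices ∀ m, x m - c ^ m • x 0 ∈ smulLoop g σ N D by simpa [x] using this m
  intro m
  induction m using Int.induction_on with
  | zero => simp
  | succ i ih => rw [key]; exact add_mem (hD i) (Submodule.smul_mem _ c ih)
  | pred i ih =>
    have h := key (-i - 1)
    rw [sub_add_cancel] at h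
    refine (Submodule.smul_mem_iff _ hc).1 ?_
    rw [eq_sub_of_add_eq' h.symm]
    exact sub_mem ih (hD _)

lemma T_tmul_sub_evalSection_mem (hN : 0 < N) (s : ℂˣ) {k : ℤ} {a : g}
    (ha : homog g σ N k a) :
    T k ⊗ₜ a - evalSection g σ N s (evalAmb g s (T k ⊗ₜ a)) ∈
      smulLoop g σ N (T N - C ((s : ℂ) ^ N)) := by
  set π := eigenProj σ.toLinearMap (eps N) N
  have hsplit : T k ⊗ₜ a - evalSection g σ N s (evalAmb g s (T k ⊗ₜ a)) =
      ∑ r ∈ Finset.range N, (T k ⊗ₜ π r a - (s : ℂ) ^ (k - r) • (T r ⊗ₜ π r a)) := by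
    rw [Finset.sum_sub_distrib, ← TensorProduct.tmul_sum,
      sum_eigenProj (isPrimitiveRoot_eps hN) hN, evalAmb_tmul, evalAt_T, evalSection_apply]
    congr 1
    refine Finset.sum_congr rfl fun r _ => ?_
    rw [map_smul, TensorProduct.tmul_smul, smul_smul, ← zpow_add₀ s.ne_zero, neg_add_eq_sub]
  rw [hsplit]
  refine sum_mem fun r _ => ?_
  rw [eigenProj_apply_of_apply_eq_zpow_smul (isPrimitiveRoot_eps hN) hN ha]
  split_ifs with hdvd
  · obtain ⟨m, hm⟩ := hdvd
    obtain rfl : k = r + N * m := by omega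
    have har : homog g σ N r a := by simpa using homog_add_mul hN ha (-m)
    simpa [zpow_mul] using T_tmul_sub_mem_smulLoop hN s har m
  · simp

lemma sub_evalSection_evalAmb_mem (hN : 0 < N) (s : ℂˣ) {x : Amb g} (hx : x ∈ Loop g σ N) :
    x - evalSection g σ N s (evalAmb g s x) ∈ smulLoop g σ N (T N - C ((s : ℂ) ^ N)) := by
  rw [mem_loop_iff] at hx
  refine (Submodule.span_le (p := (smulLoop g σ N (T N - C ((s : ℂ) ^ N))).comap
    (LinearMap.id - evalSection g σ N s ∘ₗ evalAmb g s))).2 ?_ hx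
  rintro _ ⟨k, a, ha, rfl⟩
  exact T_tmul_sub_evalSection_mem hN s ha

end Kernel

theorem statement19_general
    (g : Type) [LieRing g] [LieAlgebra ℂ g]
    (N : ℕ) (hN : 0 < N) (σ : g ≃ₗ⁅ℂ⁆ g) (hσ : ∀ a : g, (⇑σ)^[N] a = a)
    (s₀ : ℂ) (hs₀ : s₀ ≠ 0)
    (ev : Loop g σ N →ₗ[ℂ] g)
    (hev : ∀ (k : ℤ) (a : g) (h : homog g σ N k a),
      ev (sGen g σ N k a h) = (s₀ ^ k : ℂ) • a) :
    (∀ u v : Loop g σ N, ev ⁅u, v⁆ = ⁅ev u, ev v⁆) ∧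
    Function.Surjective ev ∧
    ∀ u : Loop g σ N, ev u = 0 ↔
      ∃ v : Loop g σ N, (u : Amb g) =
        (LaurentPolynomial.T (N : ℤ) - LaurentPolynomial.C (s₀ ^ (N : ℕ))) •
          (v : Amb g) := by
  let s : ℂˣ := Units.mk0 s₀ hs₀
  have hev' : ∀ u, ev u = evalAmb g s u := ev_eq_evalAmb s ev hev
  refine ⟨fun u v => ?_, fun a => ?_, fun u => ⟨fun hu => ?_, ?_⟩⟩
  · rw [hev', hev', hev', LieSubalgebra.coe_bracket, evalAmb_lie]
  · exact ⟨⟨_, evalSection_mem_loop hN hσ s a⟩, by rw [hev', evalAmb_evalSection hN]⟩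
  · have h := sub_evalSection_evalAmb_mem hN s u.2
    rw [← hev', hu, map_zero, sub_zero] at h
    obtain ⟨v, hv, hvu⟩ := h
    exact ⟨⟨v, hv⟩, hvu.symm⟩
  · rintro ⟨v, hv⟩
    rw [hev', hv, evalAmb_smul, show evalAt s (T N - C (s₀ ^ N)) = 0 from evalAt_T_sub_C s N,
      zero_smul]

/-- For a nonzero `s₀ ∈ ℂ`, the linear evaluation map
`ev : L(g,σ) → g` with `ev(s^k ⊗ a) = s₀^k a` is a surjective Lie algebra homomorphism
whose kernel is `(s^N − s₀^N)·L(g,σ)`. -/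
theorem statement19
    (g : Type) [LieRing g] [LieAlgebra ℂ g] [LieAlgebra.IsSimple ℂ g]
    [FiniteDimensional ℂ g]
    (N : ℕ) (hN : 0 < N) (σ : g ≃ₗ⁅ℂ⁆ g) (hσ : ∀ a : g, (⇑σ)^[N] a = a)
    (s₀ : ℂ) (hs₀ : s₀ ≠ 0)
    (ev : Loop g σ N →ₗ[ℂ] g)
    (hev : ∀ (k : ℤ) (a : g) (h : homog g σ N k a),
      ev (sGen g σ N k a h) = (s₀ ^ k : ℂ) • a) :
    (∀ u v : Loop g σ N, ev ⁅u, v⁆ = ⁅ev u, ev v⁆) ∧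
    Function.Surjective ev ∧
    ∀ u : Loop g σ N, ev u = 0 ↔
      ∃ v : Loop g σ N, (u : Amb g) =
        (LaurentPolynomial.T (N : ℤ) - LaurentPolynomial.C (s₀ ^ (N : ℕ))) •
          (v : Amb g) :=
  statement19_general g N hN σ hσ s₀ hs₀ ev hev

end Twisted
end
end
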